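/- Let s ∈ S and let ξ ∈ Ω_{s⋆ * s}. Then λ_s(ξ) is the unique filter in S containing the set s·ξ = {s * t : t ∈ ξ}; that is, λ_s(ξ) ⊇ s·ξ, and any filter η with s·ξ ⊆ η satisfies η = λ_s(ξ). -/
import Mathlib


/-- An inverse semigroup with zero: every element `s` has a unique generalized
inverse `star s`, and `0` is absorbing. -/
class InverseSemigroupWithZero (S : Type*) extends Semigroup S, Zero S, Star S where
  zero_mul : ∀ s : S, 0 * s = 0
  mul_zero : ∀ s : S, s * 0 = 0
  mul_star_mul_self : ∀ s : S, s * star s * s = s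
  star_mul_self_star : ∀ s : S, star s * s * star s = star s
  star_unique : ∀ s x : S, s * x * s = s → x * s * x = x → x = star s

variable {S : Type*} [InverseSemigroupWithZero S]

/-- The natural partial order on an inverse semigroup: `s ≤ t` iff `t * s⋆ * s = s`. -/
def natLe (s t : S) : Prop := t * star s * s = s

/-- A filter in the inverse semigroup `S` (w.r.t. the natural partial order). -/
def IsFilterS (ξ : Set S) : Prop :=
  ξ.Nonempty ∧ (0 : S) ∉ ξ ∧
    (∀ x ∈ ξ, ∀ y : S, natLe x y → y ∈ ξ) ∧
    ∀ x ∈ ξ, ∀ y ∈ ξ, ∃ z ∈ ξ, natLe z x ∧ natLe z y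

/-- An ultrafilter: a filter maximal under inclusion. -/
def IsUltraS (ξ : Set S) : Prop :=
  IsFilterS ξ ∧ ∀ η : Set S, IsFilterS η → ξ ⊆ η → η = ξ

/-- The set `Ω` of all ultrafilters in `S`. -/
def OmegaAll (S : Type*) [InverseSemigroupWithZero S] : Set (Set S) := {ξ | IsUltraS ξ}

/-- `Ω_e`: the set of ultrafilters `ξ` with `eξ ⊆ ξ`. -/
def OmegaE (e : S) : Set (Set S) := {ξ | IsUltraS ξ ∧ ∀ t ∈ ξ, e * t ∈ ξ}

/-- The map `λₛ` on filters. -/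
def lambdaMap (s : S) (ξ : Set S) : Set S := {u | ∃ t ∈ ξ, natLe (s * t) u}

/-- `y` is dense in `x` (for idempotents `y ≤ x`): there is no nonzero idempotent
`z ≤ x` with `z * y = 0`. -/
def DenseIn (y x : S) : Prop :=
  ∀ z : S, IsIdempotentElem z → z * x = z → z * y = 0 → z = 0

/-- `s` essentially coincides with `t`. -/
def EssEq (s t : S) : Prop :=
  star s * s = star t * t ∧
    ∀ f : S, IsIdempotentElem f → f ≠ 0 → f * (star s * s) = f →
      ∃ e : S, IsIdempotentElem e ∧ e ≠ 0 ∧ e * f = e ∧ s * e = t * e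

lemma ISG.sms (s : S) : s * star s * s = s := InverseSemigroupWithZero.mul_star_mul_self s
lemma ISG.sss (s : S) : star s * s * star s = star s := InverseSemigroupWithZero.star_mul_self_star s

lemma ISG.star_star (s : S) : star (star s) = s :=
  (InverseSemigroupWithZero.star_unique (star s) s (ISG.sss s) (ISG.sms s)).symm

lemma ISG.star_idem {e : S} (he : e * e = e) : star e = e :=
  (InverseSemigroupWithZero.star_unique e e (by rw [he, he]) (by rw [he, he])).symm

lemma ISG.ss_idem (s : S) : (star s * s) * (star s * s) = star s * s := by
  have := ISG.sss s
  calc (star s * s) * (star s * s) = (star s * s * star s) * s := by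
        simp [mul_assoc]
    _ = star s * s := by rw [this]

lemma ISG.ss_idem' (s : S) : (s * star s) * (s * star s) = s * star s := by
  calc (s * star s) * (s * star s) = (s * star s * s) * star s := by simp [mul_assoc]
    _ = s * star s := by rw [ISG.sms s]

lemma ISG.prod_idem {e f : S} (he : e * e = e) (hf : f * f = f) :
    (e * f) * (e * f) = e * f := by
  set q := star (e * f) with hq
  have hpqp : (e * f) * q * (e * f) = e * f := ISG.sms (e * f)
  have hqpq : q * (e * f) * q = q := ISG.sss (e * f)
  have hx : f * q * e = q := by
    apply InverseSemigroupWithZero.star_unique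
    · calc (e * f) * (f * q * e) * (e * f)
          = e * (f * f) * q * (e * e) * f := by simp [mul_assoc]
        _ = (e * f) * q * (e * f) := by rw [he, hf]; simp [mul_assoc]
        _ = e * f := hpqp
    · calc (f * q * e) * (e * f) * (f * q * e)
          = f * (q * ((e * e) * (f * f)) * q) * e := by simp [mul_assoc]
        _ = f * (q * (e * f) * q) * e := by rw [he, hf]
        _ = f * q * e := by rw [hqpq]
  have hxidem : q * q = q := by
    calc q * q = (f * q * e) * (f * q * e) := by rw [hx]
      _ = f * (q * (e * f) * q) * e := by simp [mul_assoc]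
      _ = f * q * e := by rw [hqpq]
      _ = q := hx
  have h2 : star q = q := ISG.star_idem hxidem
  rw [hq, ISG.star_star] at h2
  rw [h2]; exact hxidem

lemma ISG.idem_comm {e f : S} (he : e * e = e) (hf : f * f = f) :
    e * f = f * e := by
  have hef : (e * f) * (e * f) = e * f := ISG.prod_idem he hf
  have hfe : (f * e) * (f * e) = f * e := ISG.prod_idem hf he
  have h1 : f * e = star (e * f) := by
    apply InverseSemigroupWithZero.star_unique
    · calc (e * f) * (f * e) * (e * f) = e * (f * f) * (e * e) * f := by
            simp [mul_assoc]
        _ = (e * f) * (e * f) := by rw [he, hf]; simp [mul_assoc]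
        _ = e * f := hef
    · calc (f * e) * (e * f) * (f * e) = f * (e * e) * (f * f) * e := by
            simp [mul_assoc]
        _ = (f * e) * (f * e) := by rw [he, hf]; simp [mul_assoc]
        _ = f * e := hfe
  rw [h1, ISG.star_idem hef]

lemma ISG.star_mul (a b : S) : star (a * b) = star b * star a := by
  symm
  apply InverseSemigroupWithZero.star_unique
  · calc (a * b) * (star b * star a) * (a * b)
        = a * ((b * star b) * (star a * a)) * b := by simp [mul_assoc]
      _ = a * ((star a * a) * (b * star b)) * b := by
            rw [ISG.idem_comm (ISG.ss_idem' b) (ISG.ss_idem a)]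
      _ = (a * star a * a) * (b * star b * b) := by simp [mul_assoc]
      _ = a * b := by rw [ISG.sms, ISG.sms]
  · calc (star b * star a) * (a * b) * (star b * star a)
        = star b * ((star a * a) * (b * star b)) * star a := by simp [mul_assoc]
      _ = star b * ((b * star b) * (star a * a)) * star a := by
            rw [ISG.idem_comm (ISG.ss_idem a) (ISG.ss_idem' b)]
      _ = (star b * b * star b) * (star a * a * star a) := by simp [mul_assoc]
      _ = star b * star a := by rw [ISG.sss, ISG.sss]

lemma ISG.natLe_refl (x : S) : natLe x x := ISG.sms x

lemma ISG.natLe_zero {x : S} (h : natLe x (0 : S)) : x = 0 := by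
  have := h
  unfold natLe at this
  rw [InverseSemigroupWithZero.zero_mul, InverseSemigroupWithZero.zero_mul] at this
  exact this.symm

lemma ISG.mul_idem_le {e : S} (he : e * e = e) (y : S) : natLe (y * e) y := by
  unfold natLe
  rw [ISG.star_mul, ISG.star_idem he]
  calc y * (e * star y) * (y * e)
      = y * ((e * (star y * y)) * e) := by simp [mul_assoc]
    _ = y * (((star y * y) * e) * e) := by rw [ISG.idem_comm he (ISG.ss_idem y)]
    _ = y * (star y * y) * (e * e) := by simp [mul_assoc]
    _ = (y * star y * y) * e := by rw [he]; simp [mul_assoc]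
    _ = y * e := by rw [ISG.sms]

lemma ISG.idem_mul_le {e : S} (he : e * e = e) (t : S) : natLe (e * t) t := by
  unfold natLe
  rw [ISG.star_mul, ISG.star_idem he]
  calc t * (star t * e) * (e * t)
      = t * star t * (e * e) * t := by simp [mul_assoc]
    _ = (t * star t) * (e * t) := by rw [he]; simp [mul_assoc]
    _ = (t * star t) * e * t := by simp [mul_assoc]
    _ = e * (t * star t) * t := by rw [ISG.idem_comm (ISG.ss_idem' t) he]
    _ = e * t := by rw [mul_assoc e, ISG.sms]

lemma ISG.natLe_trans {x y z : S} (h1 : natLe x y) (h2 : natLe y z) : natLe x z := by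
  have hx : x = y * (star x * x) := by rw [← mul_assoc]; exact h1.symm
  have hy : y = z * (star y * y) := by rw [← mul_assoc]; exact h2.symm
  have hidem : ((star y * y) * (star x * x)) * ((star y * y) * (star x * x))
      = (star y * y) * (star x * x) := ISG.prod_idem (ISG.ss_idem y) (ISG.ss_idem x)
  have hx2 : x = z * ((star y * y) * (star x * x)) := by
    rw [← mul_assoc, ← hy, ← hx]
  have := ISG.mul_idem_le hidem z
  rw [← hx2] at this
  exact this

lemma ISG.natLe_mul_left {x y : S} (a : S) (h : natLe x y) : natLe (a * x) (a * y) := by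
  have hx : x = y * (star x * x) := by rw [← mul_assoc]; exact h.symm
  have h2 : a * x = (a * y) * (star x * x) := by
    conv_lhs => rw [hx]
    simp [mul_assoc]
  rw [h2]
  exact ISG.mul_idem_le (ISG.ss_idem x) (a * y)

theorem lambdaMap_unique_filter (s : S) (ξ : Set S) (h : ξ ∈ OmegaE (star s * s)) :
    (∀ t ∈ ξ, s * t ∈ lambdaMap s ξ) ∧
      ∀ η : Set S, IsFilterS η → (fun t => s * t) '' ξ ⊆ η → η = lambdaMap s ξ := by
  obtain ⟨hultra, _⟩ := h
  obtain ⟨hfil, hmax⟩ := hultra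
  obtain ⟨hne, h0, hup, hdir⟩ := hfil
  constructor
  · intro t ht
    exact ⟨t, ht, ISG.natLe_refl (s * t)⟩
  intro η hηfil hsub
  obtain ⟨hηne, hη0, hηup, hηdir⟩ := hηfil
  -- ζ := λ_{s⋆}(η)
  set ζ : Set S := {v | ∃ u ∈ η, natLe (star s * u) v} with hζ
  -- auxiliary: for u ∈ η, star s * u ≠ 0
  have key : ∀ u ∈ η, star s * u ≠ 0 := by
    intro u hu hsu
    obtain ⟨t0, ht0⟩ := hne
    have hst0 : s * t0 ∈ η := hsub ⟨t0, ht0, rfl⟩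
    obtain ⟨z, hz, hzu, hzst⟩ := hηdir u hu (s * t0) hst0
    -- z = s * t0 * (star z * z), and star s * z = 0 forces z = 0
    have hz1 : z = s * t0 * star z * z := hzst.symm
    have hsz : star s * z = 0 := by
      have : star s * z = star s * u * star z * z := by
        conv_lhs => rw [← hzu]
        simp [mul_assoc]
      rw [this]
      rw [show star s * u * star z * z = (star s * u) * (star z * z) by simp [mul_assoc]]
      rw [hsu, InverseSemigroupWithZero.zero_mul]
    have : z = 0 := by
      have h1 : s * (star s * z) = z := by
        conv_lhs => rw [hz1]
        calc s * (star s * (s * t0 * star z * z))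
            = (s * star s * s) * (t0 * star z * z) := by simp [mul_assoc]
          _ = s * (t0 * star z * z) := by rw [ISG.sms]
          _ = s * t0 * star z * z := by simp [mul_assoc]
          _ = z := hz1.symm
      rw [hsz, InverseSemigroupWithZero.mul_zero] at h1
      exact h1.symm
    exact hη0 (this ▸ hz)
  -- ζ is a filter
  have hζfil : IsFilterS ζ := by
    refine ⟨?_, ?_, ?_, ?_⟩
    · obtain ⟨u, hu⟩ := hηne
      exact ⟨star s * u, ⟨u, hu, ISG.natLe_refl _⟩⟩
    · rintro ⟨u, hu, hle⟩
      exact key u hu (ISG.natLe_zero hle)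
    · rintro x ⟨u, hu, hle⟩ y hxy
      exact ⟨u, hu, ISG.natLe_trans hle hxy⟩
    · rintro x ⟨u1, hu1, hle1⟩ y ⟨u2, hu2, hle2⟩
      obtain ⟨w, hw, hw1, hw2⟩ := hηdir u1 hu1 u2 hu2
      refine ⟨star s * w, ⟨w, hw, ISG.natLe_refl _⟩, ?_, ?_⟩
      · exact ISG.natLe_trans (ISG.natLe_mul_left (star s) hw1) hle1
      · exact ISG.natLe_trans (ISG.natLe_mul_left (star s) hw2) hle2
  -- ξ ⊆ ζ
  have hξζ : ξ ⊆ ζ := by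
    intro t ht
    refine ⟨s * t, hsub ⟨t, ht, rfl⟩, ?_⟩
    have : star s * (s * t) = (star s * s) * t := by simp [mul_assoc]
    rw [this]
    exact ISG.idem_mul_le (ISG.ss_idem s) t
  have hζξ : ζ = ξ := hmax ζ hζfil hξζ
  -- conclude
  ext u
  constructor
  · intro hu
    have hsu : star s * u ∈ ξ := by
      rw [← hζξ]; exact ⟨u, hu, ISG.natLe_refl _⟩
    refine ⟨star s * u, hsu, ?_⟩
    have : s * (star s * u) = (s * star s) * u := by simp [mul_assoc]
    rw [this]
    exact ISG.idem_mul_le (ISG.ss_idem' s) u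
  · rintro ⟨t, ht, hle⟩
    exact hηup (s * t) (hsub ⟨t, ht, rfl⟩) u hle
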